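/- arXiv:2507.03178 — 3 statements merged into one kernel-verified Lean document; each statement's English description precedes it below -/
import Mathlib

section
/- Let C be a binary [n,k] linear code with k > 0. Then 1 ≤ d₁(C) < d₂(C) < ⋯ < d_k(C) ≤ n, i.e., the generalized Hamming weights of C are strictly increasing, the first is at least 1, and the k-th is at most n. -/
/-- The support of a subcode `D ⊆ F₂ⁿ`: coordinates where some codeword of `D`
is nonzero. -/
def codeSupport {n : ℕ} (D : Submodule (ZMod 2) (Fin n → ZMod 2)) : Set (Fin n) :=
  { i | ∃ c ∈ D, c i ≠ 0 }

/-- The `r`-th generalized Hamming weight of a code `C ⊆ F₂ⁿ`: the size of the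
smallest support of an `r`-dimensional linear subcode of `C`. -/
noncomputable def ghw {n : ℕ} (C : Submodule (ZMod 2) (Fin n → ZMod 2)) (r : ℕ) : ℕ :=
  sInf { w | ∃ D : Submodule (ZMod 2) (Fin n → ZMod 2),
    D ≤ C ∧ Module.finrank (ZMod 2) D = r ∧ w = (codeSupport D).ncard }

/-! Deleting a coordinate `i` in the support of an optimal `(r+1)`-dimensional subcode `D`
(that is, passing to the codewords of `D` vanishing at `i`) yields an `r`-dimensional subcode
whose support misses `i`, so `d_r < d_{r+1}`. The bounds `1 ≤ d₁` and `d_k ≤ n` are the cases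
`d₀ = 0 < d₁` and `d_k ≤ |supp C|`. -/

open Module

namespace Submodule

variable {K V : Type*} [DivisionRing K] [AddCommGroup V] [Module K V]

theorem exists_le_finrank_eq (C : Submodule K V) {r : ℕ} (hr : r ≤ finrank K C) :
    ∃ D ≤ C, finrank K D = r := by
  obtain ⟨f, hf⟩ := exists_linearIndependent_of_le_finrank hr
  refine ⟨(span K (Set.range f)).map C.subtype, map_subtype_le _ _, ?_⟩
  rw [finrank_map_subtype_eq, finrank_span_eq_card hf, Fintype.card_fin]

theorem finrank_inf_ker_add_one (D : Submodule K V) [FiniteDimensional K D] (φ : V →ₗ[K] K)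
    {x : V} (hxD : x ∈ D) (hx : φ x ≠ 0) :
    finrank K ↥(D ⊓ LinearMap.ker φ) + 1 = finrank K D := by
  set g : D →ₗ[K] K := φ ∘ₗ D.subtype
  have hg : Function.Surjective g := fun a ↦
    ⟨(a * (φ x)⁻¹) • ⟨x, hxD⟩, by simp [g, mul_assoc, inv_mul_cancel₀ hx]⟩
  have hker : (LinearMap.ker g).map D.subtype = D ⊓ LinearMap.ker φ := by
    rw [LinearMap.ker_comp, map_comap_subtype]
  rw [← hker, finrank_map_subtype_eq, ← LinearMap.finrank_range_add_finrank_ker g,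
    LinearMap.range_eq_top.mpr hg, finrank_top, finrank_self, add_comm]

end Submodule

section

variable {n : ℕ}

theorem codeSupport_nonempty {D : Submodule (ZMod 2) (Fin n → ZMod 2)}
    (hD : 0 < finrank (ZMod 2) D) : (codeSupport D).Nonempty := by
  obtain ⟨c, hc, hc0⟩ := Submodule.exists_mem_ne_zero_of_ne_bot
    (mt Submodule.finrank_eq_zero.mpr hD.ne')
  obtain ⟨i, hi⟩ := Function.ne_iff.mp hc0
  exact ⟨i, c, hc, hi⟩

theorem codeSupport_inf_ker_proj_subset (D : Submodule (ZMod 2) (Fin n → ZMod 2)) (i : Fin n) :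
    codeSupport (D ⊓ LinearMap.ker (LinearMap.proj i)) ⊆ codeSupport D \ {i} := by
  rintro j ⟨c, ⟨hcD, hci⟩, hcj⟩
  refine ⟨⟨c, hcD, hcj⟩, ?_⟩
  rintro rfl
  exact hcj hci

theorem ghw_le_ncard_codeSupport {C D : Submodule (ZMod 2) (Fin n → ZMod 2)} (hD : D ≤ C) :
    ghw C (finrank (ZMod 2) D) ≤ (codeSupport D).ncard :=
  Nat.sInf_le ⟨D, hD, rfl, rfl⟩

theorem exists_ncard_codeSupport_eq_ghw (C : Submodule (ZMod 2) (Fin n → ZMod 2)) {r : ℕ}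
    (hr : r ≤ finrank (ZMod 2) C) :
    ∃ D ≤ C, finrank (ZMod 2) D = r ∧ (codeSupport D).ncard = ghw C r := by
  obtain ⟨D, hDC, hDr⟩ := C.exists_le_finrank_eq hr
  obtain ⟨D, hDC, hDr, hw⟩ := Nat.sInf_mem (s := {w | ∃ D ≤ C, finrank (ZMod 2) D = r ∧
    w = (codeSupport D).ncard}) ⟨_, D, hDC, hDr, rfl⟩
  exact ⟨D, hDC, hDr, hw.symm⟩

theorem ghw_lt_ghw_succ (C : Submodule (ZMod 2) (Fin n → ZMod 2)) {r : ℕ}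
    (hr : r < finrank (ZMod 2) C) : ghw C r < ghw C (r + 1) := by
  obtain ⟨D, hDC, hDr, hw⟩ := exists_ncard_codeSupport_eq_ghw C hr
  obtain ⟨i, c, hcD, hci⟩ := codeSupport_nonempty (D := D) (by omega)
  have hD'r : finrank (ZMod 2) ↥(D ⊓ LinearMap.ker (LinearMap.proj i)) = r := by
    have := D.finrank_inf_ker_add_one (LinearMap.proj i) hcD hci
    omega
  calc ghw C r
      ≤ (codeSupport (D ⊓ LinearMap.ker (LinearMap.proj i))).ncard :=
        hD'r ▸ ghw_le_ncard_codeSupport (inf_le_left.trans hDC)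
    _ ≤ (codeSupport D \ {i}).ncard :=
        Set.ncard_le_ncard (codeSupport_inf_ker_proj_subset D i) (Set.toFinite _)
    _ < (codeSupport D).ncard :=
        Set.ncard_sdiff_singleton_lt_of_mem ⟨c, hcD, hci⟩ (Set.toFinite _)
    _ = ghw C (r + 1) := hw

theorem ghw_finrank_le (C : Submodule (ZMod 2) (Fin n → ZMod 2)) :
    ghw C (finrank (ZMod 2) C) ≤ n :=
  calc ghw C (finrank (ZMod 2) C) ≤ (codeSupport C).ncard := ghw_le_ncard_codeSupport le_rfl
    _ ≤ n := by simpa using Set.ncard_le_card (codeSupport C)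

end

/-- Wei's monotonicity: for a binary `[n,k]` linear code `C` with
`k > 0`, one has `1 ≤ d₁(C) < d₂(C) < ⋯ < d_k(C) ≤ n`. -/
theorem ghw_strict_mono {n k : ℕ} (C : Submodule (ZMod 2) (Fin n → ZMod 2))
    (hk : Module.finrank (ZMod 2) C = k) (hk0 : 0 < k) :
    1 ≤ ghw C 1 ∧ (∀ r, 1 ≤ r → r < k → ghw C r < ghw C (r + 1)) ∧ ghw C k ≤ n := by
  subst hk
  exact ⟨Nat.one_le_of_lt (ghw_lt_ghw_succ C hk0), fun r _ hr ↦ ghw_lt_ghw_succ C hr,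
    ghw_finrank_le C⟩
end

section
/- Let C₃ ⊆ (ℤ/4ℤ)⁶ be the ℤ/4ℤ-linear code generated by the rows of G = [[1,0,0,1,2,2],[0,1,0,2,0,2],[0,0,1,2,2,0]], and let Λ = (1/2)·{x ∈ ℤ⁶ : (x mod 4) ∈ C₃} be its Construction A lattice. Then Λ is not stable: there exist two linearly independent vectors a₁, a₂ ∈ Λ whose 2×2 Gram matrix G' = (⟨aᵢ,aⱼ⟩) satisfies det(G') = 3/4 < 1. -/
/-- The rows of the generator matrix of the ℤ/4ℤ-linear code `C₃`. -/
def genC3 : Fin 3 → (Fin 6 → ZMod 4) :=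
  ![![1, 0, 0, 1, 2, 2], ![0, 1, 0, 2, 0, 2], ![0, 0, 1, 2, 2, 0]]

/-- The code `C₃ ⊆ (ℤ/4ℤ)⁶` generated by the rows of `genC3`. -/
def codeC3 : Submodule (ZMod 4) (Fin 6 → ZMod 4) :=
  Submodule.span (ZMod 4) (Set.range genC3)

/-- The Construction A lattice `Λ = (1/2)·{x ∈ ℤ⁶ : x mod 4 ∈ C₃}`. -/
def latticeC3 : Set (Fin 6 → ℝ) :=
  { v | ∃ x : Fin 6 → ℤ, (fun i => (x i : ZMod 4)) ∈ codeC3 ∧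
    v = fun i => (x i : ℝ) / 2 }

/-!
The codewords `(1,3,3,1,0,0) = g₁ + 3g₂ + 3g₃` and `(0,2,0,0,0,0) = 2g₂` of `C₃` give the
lattice vectors `a₁ = ½(1,-1,-1,1,0,0)` and `a₂ = (0,1,0,0,0,0)`. Both have norm `1` and
`⟨a₁, a₂⟩ = -1/2`, so they span a hexagonal plane lattice with Gram determinant `1 - 1/4 = 3/4`.
-/

open Matrix

theorem linearIndependent_of_det_dotProduct_gram_ne_zero {ι κ : Type*} [Fintype ι]
    [DecidableEq ι] [Fintype κ] {v : ι → κ → ℝ} (h : (of fun i j => v i ⬝ᵥ v j).det ≠ 0) :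
    LinearIndependent ℝ v := by
  have hgram : gram ℝ (fun i => WithLp.toLp 2 (v i)) = of fun i j => v i ⬝ᵥ v j := by
    ext i j
    simp [gram_apply, EuclideanSpace.inner_toLp_toLp, dotProduct_comm]
  exact (linearIndependent_of_det_gram_ne_zero (hgram ▸ h)).of_comp
    (WithLp.linearEquiv 2 ℝ (κ → ℝ)).symm.toLinearMap

theorem linearIndependent_pair_of_det_ne_zero {κ : Type*} [Fintype κ] {a b : κ → ℝ}
    (h : !![∑ j, a j * a j, ∑ j, a j * b j; ∑ j, b j * a j, ∑ j, b j * b j].det ≠ 0) :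
    LinearIndependent ℝ ![a, b] := by
  refine linearIndependent_of_det_dotProduct_gram_ne_zero ?_
  convert h using 2
  ext i j
  fin_cases i <;> fin_cases j <;> rfl

theorem sum_smul_genC3_mem_codeC3 (c : Fin 3 → ZMod 4) : ∑ i, c i • genC3 i ∈ codeC3 :=
  Submodule.sum_mem _ fun i _ => Submodule.smul_mem _ _ (Submodule.subset_span ⟨i, rfl⟩)

theorem half_mem_latticeC3 {x : Fin 6 → ℤ} (c : Fin 3 → ZMod 4)
    (hx : (fun i => (x i : ZMod 4)) = ∑ i, c i • genC3 i) :
    (fun i => (x i : ℝ) / 2) ∈ latticeC3 :=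
  ⟨x, hx ▸ sum_smul_genC3_mem_codeC3 c, rfl⟩

/-- the lattice `Λ = A₄(C₃)` is not stable: it contains two linearly
independent vectors whose 2×2 Gram determinant equals `3/4 < 1`. -/
theorem latticeC3_not_stable :
    ∃ a₁ a₂ : Fin 6 → ℝ, a₁ ∈ latticeC3 ∧ a₂ ∈ latticeC3 ∧
      LinearIndependent ℝ ![a₁, a₂] ∧
      (!![∑ j, a₁ j * a₁ j, ∑ j, a₁ j * a₂ j;
          ∑ j, a₂ j * a₁ j, ∑ j, a₂ j * a₂ j] : Matrix (Fin 2) (Fin 2) ℝ).det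
        = 3 / 4 ∧ (3 / 4 : ℝ) < 1 := by
  refine ⟨_, _, half_mem_latticeC3 (x := ![1, -1, -1, 1, 0, 0]) ![1, 3, 3] (by decide),
    half_mem_latticeC3 (x := ![0, 2, 0, 0, 0, 0]) ![0, 2, 0] (by decide),
    linearIndependent_pair_of_det_ne_zero (ne_of_eq_of_ne ?gram (by norm_num)), ?gram, by norm_num⟩
  simp only [det_fin_two_of, Fin.sum_univ_six, cons_val]
  norm_num
end

section
/- Let C₃ ⊆ (ℤ/4ℤ)⁶ be the ℤ/4ℤ-linear code generated by the rows of G = [[1,0,0,1,2,2],[0,1,0,2,0,2],[0,0,1,2,2,0]], and let Λ = (1/2)·{x ∈ ℤ⁶ : (x mod 4) ∈ C₃} be its Construction A lattice. Then the minimum squared Euclidean norm of a nonzero vector of Λ equals 1, and Λ contains exactly 12 vectors of squared norm 1. -/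
/-!
A vector of `Λ` is `x / 2` with `x ∈ ℤ⁶` and `c = x mod 4 ∈ C₃`. Coordinatewise, `x i ^ 2` is
at least the Euclidean weight `min(c i, 4 - c i)²`, and if `c = 0` but `x ≠ 0` then
`∑ x i ^ 2 ≥ 16`. Every nonzero codeword of `C₃` has Euclidean weight at least `4` (a check
over its 64 codewords), so `‖x / 2‖² ≥ 1`. Equality forces each `x i` to be a lift of `c i` of
least absolute value, which is unique except for the two lifts `±2` of `2`; running through the
codewords of weight `4` with these lifts gives exactly 12 vectors.
-/

namespace ZMod

def euclideanWeight {n : ℕ} (z : ZMod n) : ℕ := min z.val (n - z.val) ^ 2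

theorem euclideanWeight_intCast_le_sq {n : ℕ} [NeZero n] (x : ℤ) :
    (euclideanWeight (x : ZMod n) : ℤ) ≤ x ^ 2 := by
  have hn : (0 : ℤ) < n := by exact_mod_cast Nat.pos_of_ne_zero (NeZero.ne n)
  have hle : (x : ZMod n).val ≤ n := (ZMod.val_lt _).le
  unfold euclideanWeight
  push_cast [Nat.cast_min, Nat.cast_sub hle, ZMod.val_intCast]
  -- `x = r + n q` with `0 ≤ r < n`: `r ≤ x` if `q ≥ 0`, and `x ≤ r - n` if `q < 0`.
  set r := x % n
  set q := x / n
  have hx : r + n * q = x := Int.emod_add_mul_ediv x n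
  have hr0 : 0 ≤ r := Int.emod_nonneg x hn.ne'
  have hrn : r < n := Int.emod_lt_of_pos x hn
  have hmin : 0 ≤ min r (n - r) := le_min hr0 (by linarith)
  rcases le_or_gt 0 q with hq | hq
  · have hrx : r ≤ x := by nlinarith
    calc min r (n - r) ^ 2 ≤ r ^ 2 := pow_le_pow_left₀ hmin (min_le_left _ _) 2
      _ ≤ x ^ 2 := pow_le_pow_left₀ hr0 hrx 2
  · have hxr : x ≤ r - n := by nlinarith
    calc min r (n - r) ^ 2 ≤ (n - r) ^ 2 := pow_le_pow_left₀ hmin (min_le_right _ _) 2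
      _ ≤ x ^ 2 := by nlinarith

theorem sq_le_sq_of_intCast_eq_zero {n : ℕ} {x : ℤ} (hx : (x : ZMod n) = 0) (h0 : x ≠ 0) :
    (n : ℤ) ^ 2 ≤ x ^ 2 :=
  Int.natAbs_le_iff_sq_le.mp <|
    Int.natAbs_le_of_dvd_ne_zero ((ZMod.intCast_zmod_eq_zero_iff_dvd x n).mp hx) h0

theorem euclideanWeight_le_four (z : ZMod 4) : euclideanWeight z ≤ 4 := by
  revert z; decide

/-- The lift of `z : ZMod 4` to `{-2, …, 2}`, where `s` chooses the sign of the lift of `2`. -/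
def signedLift (z : ZMod 4) (s : Bool) : ℤ :=
  if z = 2 then (if s then 2 else -2) else if z = 3 then -1 else z.val

theorem eq_signedLift_of_sq_eq_euclideanWeight {x : ℤ}
    (h : x ^ 2 = euclideanWeight (x : ZMod 4)) : x = signedLift x (decide (0 < x)) := by
  have hx : x ^ 2 ≤ 4 := by have := euclideanWeight_le_four x; omega
  have hlo : -2 ≤ x := by nlinarith
  have hhi : x ≤ 2 := by nlinarith
  interval_cases x <;> decide

end ZMod

open ZMod

section Words

variable {ι : Type*} [Fintype ι] {n : ℕ}

def wordEuclideanWeight (c : ι → ZMod n) : ℕ := ∑ i, euclideanWeight (c i)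

theorem wordEuclideanWeight_intCast_le_sum_sq [NeZero n] (x : ι → ℤ) :
    (wordEuclideanWeight (fun i => (x i : ZMod n)) : ℤ) ≤ ∑ i, x i ^ 2 := by
  unfold wordEuclideanWeight
  push_cast
  exact Finset.sum_le_sum fun i _ => euclideanWeight_intCast_le_sq (x i)

theorem sq_eq_euclideanWeight_of_sum_sq_eq [NeZero n] {x : ι → ℤ}
    (h : ∑ i, x i ^ 2 = wordEuclideanWeight (fun i => (x i : ZMod n))) (i : ι) :
    x i ^ 2 = euclideanWeight (x i : ZMod n) := by
  unfold wordEuclideanWeight at h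
  push_cast at h
  exact ((Finset.sum_eq_sum_iff_of_le fun i _ => euclideanWeight_intCast_le_sq (x i)).mp
    h.symm i (Finset.mem_univ i)).symm

theorem sq_le_sum_sq_of_intCast_eq_zero {x : ι → ℤ} (hx : (fun i => (x i : ZMod n)) = 0)
    (h0 : x ≠ 0) : (n : ℤ) ^ 2 ≤ ∑ i, x i ^ 2 := by
  obtain ⟨i, hi⟩ := Function.ne_iff.mp h0
  calc (n : ℤ) ^ 2 ≤ x i ^ 2 := sq_le_sq_of_intCast_eq_zero (congrFun hx i) hi
    _ ≤ ∑ j, x j ^ 2 := Finset.single_le_sum (fun j _ => sq_nonneg (x j)) (Finset.mem_univ i)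

end Words

theorem mem_codeC3_iff (c : Fin 6 → ZMod 4) :
    c ∈ codeC3 ↔ ∃ t : Fin 3 → ZMod 4, ∑ i, t i • genC3 i = c :=
  Submodule.mem_span_range_iff_exists_fun _

theorem four_le_wordEuclideanWeight_of_mem_codeC3 {c : Fin 6 → ZMod 4} (hc : c ∈ codeC3)
    (h0 : c ≠ 0) : 4 ≤ wordEuclideanWeight c := by
  obtain ⟨t, rfl⟩ := (mem_codeC3_iff c).mp hc
  clear hc
  revert t
  decide

theorem four_le_sum_sq_of_mem_codeC3 {x : Fin 6 → ℤ} (hx : (fun i => (x i : ZMod 4)) ∈ codeC3)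
    (h0 : x ≠ 0) : 4 ≤ ∑ i, x i ^ 2 := by
  by_cases hc : (fun i => (x i : ZMod 4)) = 0
  · have := sq_le_sum_sq_of_intCast_eq_zero hc h0
    norm_num at this
    omega
  · have := wordEuclideanWeight_intCast_le_sum_sq (n := 4) x
    have := four_le_wordEuclideanWeight_of_mem_codeC3 hx hc
    omega

def twiceMinimalVectorsC3 : Finset (Fin 6 → ℤ) :=
  {![0, 2, 0, 0, 0, 0], ![0, -2, 0, 0, 0, 0], ![0, 0, 2, 0, 0, 0], ![0, 0, -2, 0, 0, 0],
   ![1, 1, 1, 1, 0, 0], ![1, 1, -1, 1, 0, 0], ![1, -1, 1, 1, 0, 0], ![1, -1, -1, 1, 0, 0],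
   ![-1, 1, 1, -1, 0, 0], ![-1, 1, -1, -1, 0, 0], ![-1, -1, 1, -1, 0, 0],
   ![-1, -1, -1, -1, 0, 0]}

set_option maxRecDepth 10000 in
theorem signedLift_mem_twiceMinimalVectorsC3 :
    ∀ t : Fin 3 → ZMod 4, ∀ s : Fin 6 → Bool,
      wordEuclideanWeight (∑ i, t i • genC3 i) = 4 →
      (fun j => signedLift ((∑ i, t i • genC3 i) j) (s j)) ∈ twiceMinimalVectorsC3 := by
  decide

theorem mem_twiceMinimalVectorsC3_iff (x : Fin 6 → ℤ) :
    x ∈ twiceMinimalVectorsC3 ↔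
      (fun i => (x i : ZMod 4)) ∈ codeC3 ∧ ∑ i, x i ^ 2 = 4 := by
  constructor
  · intro hx
    rw [mem_codeC3_iff]
    revert x
    decide
  · rintro ⟨hc, hx⟩
    have h0 : x ≠ 0 := by rintro rfl; simp at hx
    have hc0 : (fun i => (x i : ZMod 4)) ≠ 0 := fun hc0 => by
      have := sq_le_sum_sq_of_intCast_eq_zero hc0 h0
      omega
    have hle := wordEuclideanWeight_intCast_le_sum_sq (n := 4) x
    have hge := four_le_wordEuclideanWeight_of_mem_codeC3 hc hc0
    have hsq := sq_eq_euclideanWeight_of_sum_sq_eq (n := 4) (x := x) (by omega)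
    have hlift : x = fun j => signedLift (x j) (decide (0 < x j)) :=
      funext fun j => eq_signedLift_of_sq_eq_euclideanWeight (hsq j)
    obtain ⟨t, ht⟩ := (mem_codeC3_iff _).mp hc
    have hmem := signedLift_mem_twiceMinimalVectorsC3 t (fun j => decide (0 < x j))
      (by rw [ht]; omega)
    rw [ht] at hmem
    rwa [hlift]

theorem sum_sq_intCast_div_two {ι : Type*} [Fintype ι] (x : ι → ℤ) :
    ∑ i, ((x i : ℝ) / 2) ^ 2 = ((∑ i, x i ^ 2 : ℤ) : ℝ) / 4 := by
  push_cast
  rw [Finset.sum_div]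
  congr! 1 with i
  ring

theorem intCast_div_two_injective {ι : Type*} :
    Function.Injective fun (x : ι → ℤ) i => (x i : ℝ) / 2 := fun a b h =>
  funext fun i => by simpa using congrFun h i

theorem one_le_sum_sq_of_mem_latticeC3 {v : Fin 6 → ℝ} (hv : v ∈ latticeC3) (h0 : v ≠ 0) :
    1 ≤ ∑ j, v j ^ 2 := by
  obtain ⟨x, hx, rfl⟩ := hv
  have hx0 : x ≠ 0 := by
    rintro rfl
    exact h0 (funext fun i => by simp)
  have h4 : (4 : ℝ) ≤ ((∑ i, x i ^ 2 : ℤ) : ℝ) := by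
    exact_mod_cast four_le_sum_sq_of_mem_codeC3 hx hx0
  rw [sum_sq_intCast_div_two]
  linarith

theorem setOf_mem_latticeC3_sum_sq_eq_one :
    {v | v ∈ latticeC3 ∧ ∑ j, v j ^ 2 = 1} =
      (fun (x : Fin 6 → ℤ) i => (x i : ℝ) / 2) '' twiceMinimalVectorsC3 := by
  ext v
  simp only [Set.mem_ofPred_eq, Set.mem_image, Finset.mem_coe, mem_twiceMinimalVectorsC3_iff]
  constructor
  · rintro ⟨⟨x, hx, rfl⟩, h1⟩
    rw [sum_sq_intCast_div_two] at h1
    have h4 : ((∑ i, x i ^ 2 : ℤ) : ℝ) = 4 := by linarith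
    exact ⟨x, ⟨hx, by exact_mod_cast h4⟩, rfl⟩
  · rintro ⟨x, ⟨hx, h4⟩, rfl⟩
    refine ⟨⟨x, hx, rfl⟩, ?_⟩
    rw [sum_sq_intCast_div_two, h4]
    norm_num

/-- the minimum squared Euclidean norm of a nonzero vector of
`Λ = A₄(C₃)` equals `1`, and `Λ` contains exactly `12` vectors of squared norm `1`. -/
theorem latticeC3_min_norm_and_kissing :
    IsLeast { t : ℝ | ∃ v ∈ latticeC3, v ≠ 0 ∧ t = ∑ j, v j ^ 2 } 1 ∧
      { v | v ∈ latticeC3 ∧ ∑ j, v j ^ 2 = 1 }.ncard = 12 := by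
  refine ⟨⟨?_, ?_⟩, ?_⟩
  · have hmin : ![0, 2, 0, 0, 0, 0] ∈ twiceMinimalVectorsC3 := by decide
    obtain ⟨v, hv, h1⟩ : {v | v ∈ latticeC3 ∧ ∑ j, v j ^ 2 = 1}.Nonempty := by
      rw [setOf_mem_latticeC3_sum_sq_eq_one]
      exact ⟨_, Set.mem_image_of_mem _ hmin⟩
    refine ⟨v, hv, ?_, h1.symm⟩
    rintro rfl
    simp at h1
  · rintro t ⟨v, hv, h0, rfl⟩
    exact one_le_sum_sq_of_mem_latticeC3 hv h0
  · rw [setOf_mem_latticeC3_sum_sq_eq_one,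
      Set.ncard_image_of_injective _ intCast_div_two_injective, Set.ncard_coe_finset]
    rfl
end
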